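/- Let Φ(t) be the fundamental matrix solution of the linear cyclic negative feedback system with Φ(0) = I, let 1 ≤ h ≤ (ñ+1)/2, and let Σ⁰ ⊂ K^h be a linear subspace of ℝⁿ. For t ∈ ℝ let Σ^t = Φ(t)(Σ⁰). Then dim Σ^t = dim Σ⁰ for all t ∈ ℝ, and Σ^t ⊂ K^h for all t ≤ 0. -/

import Mathlib

open Filter Topology

/-- δ₁ = −1 (index `0` in our 0-based indexing), δᵢ = 1 for the other indices. -/
def cyclicDelta (n : ℕ) [NeZero n] (i : Fin n) : ℝ := if i = 0 then -1 else 1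

/-- The set Λ of vectors with all coordinates nonzero. -/
def cyclicLambda (n : ℕ) [NeZero n] : Set (Fin n → ℝ) := {x | ∀ i, x i ≠ 0}

/-- The integer valued Lyapunov function `N(x) = card {i : δᵢ xᵢ x_{i−1} < 0}`
(cyclic indices, `x₀ = xₙ`). -/
noncomputable def cyclicN (n : ℕ) [NeZero n] (x : Fin n → ℝ) : ℕ :=
  Nat.card {i : Fin n // cyclicDelta n i * x i * x (i - 1) < 0}

/-- `N_m(x)`: the minimum of `N` over `U ∩ Λ` for all sufficiently small
neighborhoods `U` of `x`, i.e. the least value of `N` attained in every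
neighborhood of `x` within `Λ`. -/
noncomputable def cyclicNm (n : ℕ) [NeZero n] (x : Fin n → ℝ) : ℕ :=
  sInf {k | ∃ᶠ y in 𝓝[cyclicLambda n] x, cyclicN n y = k}

/-- `N_M(x)`: the maximum of `N` over `U ∩ Λ` for all sufficiently small
neighborhoods `U` of `x`. -/
noncomputable def cyclicNM (n : ℕ) [NeZero n] (x : Fin n → ℝ) : ℕ :=
  sSup {k | ∃ᶠ y in 𝓝[cyclicLambda n] x, cyclicN n y = k}

/-- The set 𝒩 on which `N` extends continuously. -/
def cyclicGood (n : ℕ) [NeZero n] : Set (Fin n → ℝ) :=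
  {x | cyclicNm n x = cyclicNM n x}

/-- ñ = n if n is odd, n − 1 if n is even. -/
def ntilde (n : ℕ) : ℕ := if n % 2 = 1 then n else n - 1

/-- A linear cyclic negative feedback system: coefficients `diag t i = a_{ii}(t)`
and `sub t i = a_{i,i−1}(t)` (cyclically, `sub t 0 = a_{1,n}(t)`), all continuous,
with `a_{1,n}(t) < 0` and `a_{i,i−1}(t) > 0` for `i ≠ 1`. -/
structure LinCNF (n : ℕ) [NeZero n] where
  diag : ℝ → Fin n → ℝ
  sub : ℝ → Fin n → ℝ
  cont_diag : ∀ i, Continuous fun t => diag t i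
  cont_sub : ∀ i, Continuous fun t => sub t i
  sub_neg : ∀ t, sub t 0 < 0
  sub_pos : ∀ t (i : Fin n), i ≠ 0 → 0 < sub t i

/-- `x` is a solution of the linear system `ẋᵢ = a_{ii}(t)xᵢ + a_{i,i−1}(t)x_{i−1}`. -/
def LinCNF.IsSolution {n : ℕ} [NeZero n] (S : LinCNF n) (x : ℝ → Fin n → ℝ) : Prop :=
  ∀ (t : ℝ) (i : Fin n),
    HasDerivAt (fun s => x s i) (S.diag t i * x t i + S.sub t i * x t (i - 1)) t

/-- `Φ` is the fundamental (matrix) solution, `Φ(0) = I`. -/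
def LinCNF.IsFundamental {n : ℕ} [NeZero n] (S : LinCNF n)
    (Φ : ℝ → (Fin n → ℝ) →ₗ[ℝ] (Fin n → ℝ)) : Prop :=
  Φ 0 = LinearMap.id ∧ ∀ x₀ : Fin n → ℝ, S.IsSolution fun t => Φ t x₀

/-- The cone `K_h = {0} ∪ {x : N_M(x) ≤ 2h − 1}`. -/
def Kcone (n : ℕ) [NeZero n] (h : ℕ) : Set (Fin n → ℝ) :=
  {0} ∪ {x | cyclicNM n x ≤ 2 * h - 1}

/-- The complementary cone `K^h = {0} ∪ {x : N_m(x) > 2h − 1}`. -/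
def KconeUp (n : ℕ) [NeZero n] (h : ℕ) : Set (Fin n → ℝ) :=
  {0} ∪ {x | 2 * h - 1 < cyclicNm n x}

/-!
`Φ t` is injective because a solution of a linear equation that vanishes once vanishes
identically; this gives the dimension statement.

For the cone, `N_m x` is the least value of `N` over the sign completions of `x` (points of `Λ`
with the sign of `x` off its zeros), hence lower semicontinuous. Just after a time `t₀`, a
nonzero solution lies in `Λ`, and each zero coordinate of `x t₀` takes the sign that the
feedback term from its predecessor forces on it (an integrating-factor argument), so no sign
change is created there. Flipping signs one at a time shows that this completion minimises `N`,
so `N_m (x t)` does not increase just after `t₀`. A lower semicontinuous function on `ℝ` that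
locally does not increase to the right is antitone; hence `N_m (x t) ≥ N_m (x 0) > 2h - 1` for
`t ≤ 0`.
-/

open Set

theorem mul_mul_neg_of_mul_pos {α : Type*} [CommRing α] [LinearOrder α] [IsStrictOrderedRing α]
    {d a b a' b' : α} (ha : 0 < a * a') (hb : 0 < b * b')
    (h : d * a * b < 0) : d * a' * b' < 0 := by
  have e : d * a * b * (a * a' * (b * b')) = d * a' * b' * (a * b) ^ 2 := by ring
  exact neg_of_mul_neg_left (e ▸ mul_neg_of_neg_of_pos h (mul_pos ha hb)) (sq_nonneg _)

theorem mul_pos_of_mul_pos_of_mul_pos {α : Type*} [CommRing α] [LinearOrder α]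
    [IsStrictOrderedRing α] {a b c : α} (hab : 0 < a * b) (hbc : 0 < b * c) :
    0 < a * c := by
  have e : a * b * (b * c) = a * c * b ^ 2 := by ring
  exact pos_of_mul_pos_left (e ▸ mul_pos hab hbc) (sq_nonneg b)

theorem eventually_mul_pos_of_ne_zero {ι : Type*} [Finite ι] (x : ι → ℝ) :
    ∀ᶠ y in 𝓝 x, ∀ i, x i ≠ 0 → 0 < x i * y i :=
  eventually_all.2 fun i => by
    by_cases hi : x i = 0
    · exact Eventually.of_forall fun _ h => absurd hi h
    · have : ContinuousAt (fun y : ι → ℝ => x i * y i) x :=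
        (continuous_const.mul (continuous_apply i)).continuousAt
      exact (this.eventually (lt_mem_nhds (mul_self_pos.2 hi))).mono fun _ h _ => h

theorem ODE_solution_eq_zero_of_linear {E : Type*} [NormedAddCommGroup E] [NormedSpace ℝ E]
    {A : ℝ → E →L[ℝ] E} (hA : Continuous A) {x : ℝ → E}
    (hx : ∀ t, HasDerivAt x (A t (x t)) t) {t₀ : ℝ} (h₀ : x t₀ = 0) : x = 0 := by
  funext t
  obtain ⟨a, b, ht, ht₀⟩ : ∃ a b, t ∈ Ioo a b ∧ t₀ ∈ Ioo a b :=
    ⟨min t t₀ - 1, max t t₀ + 1, by grind⟩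
  obtain ⟨K, hK⟩ := isCompact_Icc.exists_bound_of_continuousOn (hA.continuousOn (s := Icc a b))
  have hlip : ∀ s ∈ Ioo a b, LipschitzOnWith K.toNNReal (A s) univ := fun s hs =>
    ((A s).lipschitz.weaken (by
      rw [← NNReal.coe_le_coe, coe_nnnorm, Real.coe_toNNReal']
      exact (hK s (Ioo_subset_Icc_self hs)).trans (le_max_left _ _))).lipschitzOnWith
  refine ODE_solution_unique_of_mem_Ioo hlip ht₀ (fun s _ => ⟨hx s, trivial⟩)
    (fun s _ => ⟨?_, trivial⟩) h₀ ht
  simp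

theorem eventually_pos_of_hasDerivAt_linear {a f y : ℝ → ℝ} (ha : Continuous a)
    (hy : ∀ t, HasDerivAt y (a t * y t + f t) t) {t₀ : ℝ} (h₀ : y t₀ = 0)
    (hf : ∀ᶠ t in 𝓝[>] t₀, 0 < f t) : ∀ᶠ t in 𝓝[>] t₀, 0 < y t := by
  obtain ⟨t₁, ht₁, hft₁⟩ := (mem_nhdsGT_iff_exists_Ioo_subset' (lt_add_one t₀)).1 hf
  set A : ℝ → ℝ := fun u => ∫ r in t₀..u, a r
  -- the integrating factor `exp (-A)` turns the equation into `(exp (-A) * y)' = exp (-A) * f`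
  set g : ℝ → ℝ := fun u => Real.exp (-A u) * y u
  have hg : ∀ u, HasDerivAt g (Real.exp (-A u) * f u) u := fun u => by
    have hA : HasDerivAt A (a u) u := (ha.integral_hasStrictDerivAt t₀ u).hasDerivAt
    exact (hA.neg.exp.mul (hy u)).congr_deriv (by simp only [Pi.neg_apply]; ring)
  have hmono : StrictMonoOn g (Icc t₀ t₁) := by
    refine strictMonoOn_of_deriv_pos (convex_Icc _ _)
      (continuous_iff_continuousAt.2 fun u => (hg u).continuousAt).continuousOn fun u hu => ?_
    rw [interior_Icc] at hu
    rw [(hg u).deriv]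
    exact mul_pos (Real.exp_pos _) (hft₁ hu)
  filter_upwards [Ioo_mem_nhdsGT ht₁] with t ht
  have hgt : g t₀ < g t :=
    hmono (left_mem_Icc.2 ht₁.le) (Ioo_subset_Icc_self ht) ht.1
  have hg₀ : g t₀ = 0 := by simp [g, h₀]
  exact pos_of_mul_pos_right (hg₀ ▸ hgt) (Real.exp_pos _).le

theorem LowerSemicontinuous.antitone_of_eventually_nhdsGT_le {α β : Type*}
    [ConditionallyCompleteLinearOrder α] [TopologicalSpace α] [OrderTopology α] [DenselyOrdered α]
    [LinearOrder β] {f : α → β} (hf : LowerSemicontinuous f)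
    (h : ∀ t, ∀ᶠ s in 𝓝[>] t, f s ≤ f t) : Antitone f := fun a _ hab =>
  ((hf.isClosed_preimage (f a)).inter isClosed_Icc).Icc_subset_of_forall_mem_nhdsWithin
    (le_refl (f a)) (fun t ht => (h t).mono fun _ hs => hs.trans ht.1) ⟨hab, le_rfl⟩

open Fin.NatCast in
theorem Fin.exists_and_not_sub_one {n : ℕ} [NeZero n] {p : Fin n → Prop} (h : ∃ i, p i)
    (h' : ∃ i, ¬p i) : ∃ i, p i ∧ ¬p (i - 1) := by
  by_contra! hcl
  obtain ⟨i, hi⟩ := h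
  obtain ⟨j, hj⟩ := h'
  have hm : ∀ m : ℕ, p (i - m) := fun m => by
    induction m with
    | zero => simpa using hi
    | succ m ih => simpa [sub_add_eq_sub_sub] using hcl _ ih
  exact hj (by simpa using hm (i - j).val)

section SignCompletion

variable {n : ℕ} [NeZero n]

theorem cyclicN_eq_of_forall_mul_pos {y z : Fin n → ℝ} (h : ∀ i, 0 < y i * z i) :
    cyclicN n y = cyclicN n z := by
  have h' : ∀ i, 0 < z i * y i := fun i => mul_comm (y i) (z i) ▸ h i
  exact Nat.card_congr <| Equiv.subtypeEquivRight fun i =>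
    ⟨mul_mul_neg_of_mul_pos (h i) (h (i - 1)), mul_mul_neg_of_mul_pos (h' i) (h' (i - 1))⟩

/-- The sign patterns that `N` takes on `Λ` arbitrarily close to `x`. -/
def IsSignCompletion (x σ : Fin n → ℝ) : Prop :=
  σ ∈ cyclicLambda n ∧ ∀ i, x i ≠ 0 → 0 < x i * σ i

variable {x σ : Fin n → ℝ}

theorem IsSignCompletion.frequently_cyclicN_eq (h : IsSignCompletion x σ) :
    ∃ᶠ y in 𝓝[cyclicLambda n] x, cyclicN n y = cyclicN n σ := by
  have hpos : ∀ ε : ℝ, 0 < ε → ∀ i, 0 < (x + ε • σ) i * σ i := fun ε hε i => by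
    have hx : 0 ≤ x i * σ i := by
      by_cases hi : x i = 0
      · simp [hi]
      · exact (h.2 i hi).le
    have hσ : 0 < σ i * σ i := mul_self_pos.2 (h.1 i)
    simp only [Pi.add_apply, Pi.smul_apply, smul_eq_mul]
    nlinarith
  have htend : Tendsto (fun ε : ℝ => x + ε • σ) (𝓝[>] 0) (𝓝[cyclicLambda n] x) := by
    refine tendsto_nhdsWithin_iff.2 ⟨?_, ?_⟩
    · exact (Continuous.tendsto' (by fun_prop) 0 x (by simp)).mono_left nhdsWithin_le_nhds
    · filter_upwards [self_mem_nhdsWithin] with ε hε i hi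
      simpa [hi] using hpos ε hε i
  refine htend.frequently (Eventually.frequently ?_)
  filter_upwards [self_mem_nhdsWithin] with ε hε
  exact cyclicN_eq_of_forall_mul_pos (hpos ε hε)

theorem IsSignCompletion.cyclicNm_le (h : IsSignCompletion x σ) : cyclicNm n x ≤ cyclicN n σ :=
  Nat.sInf_le h.frequently_cyclicN_eq

theorem exists_isSignCompletion_cyclicN_eq_cyclicNm (x : Fin n → ℝ) :
    ∃ σ, IsSignCompletion x σ ∧ cyclicN n σ = cyclicNm n x := by
  have hσ : IsSignCompletion x fun i => if x i = 0 then 1 else x i :=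
    ⟨fun i => by by_cases hi : x i = 0 <;> simp [hi], fun i hi => by simp [hi]⟩
  have hmem : ∃ᶠ y in 𝓝[cyclicLambda n] x, cyclicN n y = cyclicNm n x :=
    Nat.sInf_mem (s := {k | ∃ᶠ y in 𝓝[cyclicLambda n] x, cyclicN n y = k})
      ⟨_, hσ.frequently_cyclicN_eq⟩
  obtain ⟨y, hy, hsign, hyΛ⟩ := (hmem.and_eventually ((eventually_nhdsWithin_of_eventually_nhds
    (eventually_mul_pos_of_ne_zero x)).and self_mem_nhdsWithin)).exists
  exact ⟨y, ⟨hyΛ, hsign⟩, hy⟩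

theorem lowerSemicontinuous_cyclicNm : LowerSemicontinuous (cyclicNm n) := by
  intro x c hc
  filter_upwards [eventually_mul_pos_of_ne_zero x] with y hy
  obtain ⟨ρ, hρ, hρN⟩ := exists_isSignCompletion_cyclicN_eq_cyclicNm y
  have hρx : IsSignCompletion x ρ := ⟨hρ.1, fun i hi =>
    mul_pos_of_mul_pos_of_mul_pos (hy i hi) (hρ.2 i (right_ne_zero_of_mul (hy i hi).ne'))⟩
  exact hc.trans_le (hρN ▸ hρx.cyclicNm_le)

theorem cyclicDelta_ne_zero (i : Fin n) : cyclicDelta n i ≠ 0 := by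
  unfold cyclicDelta
  split_ifs <;> norm_num

theorem cyclicN_update_neg_le {τ : Fin n → ℝ} {i : Fin n}
    (h : cyclicDelta n i * τ i * τ (i - 1) < 0) :
    cyclicN n (Function.update τ i (-τ i)) ≤ cyclicN n τ := by
  classical
  simp only [cyclicN, Nat.card_eq_fintype_card, Fintype.card_subtype]
  set τ' := Function.update τ i (-τ i)
  set F := Finset.univ.filter fun j => cyclicDelta n j * τ j * τ (j - 1) < 0
  have hi : i ∈ F := by simpa [F] using h
  -- flipping `τ i` removes the sign change at `i` and can only create one at `i + 1`
  have hsub : Finset.univ.filter (fun j => cyclicDelta n j * τ' j * τ' (j - 1) < 0) ⊆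
      insert (i + 1) (F.erase i) := by
    intro j hj
    simp only [Finset.mem_filter, Finset.mem_univ, true_and, Finset.mem_insert,
      Finset.mem_erase] at hj ⊢
    by_cases hji : j = i + 1
    · exact Or.inl hji
    have hj1 : j - 1 ≠ i := fun e => hji (by rw [← e, sub_add_cancel])
    by_cases hj' : j = i
    · subst hj'
      simp only [τ', Function.update_self, Function.update_of_ne hj1] at hj
      linarith
    · simp only [τ', Function.update_of_ne hj', Function.update_of_ne hj1] at hj
      exact Or.inr ⟨hj', by simpa [F] using hj⟩
  calc _ ≤ (insert (i + 1) (F.erase i)).card := Finset.card_le_card hsub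
    _ ≤ (F.erase i).card + 1 := Finset.card_insert_le _ _
    _ = F.card := Finset.card_erase_add_one hi

/-- The sign patterns taken by a solution just after it passes through `x`. -/
def IsPropagatedCompletion (x σ : Fin n → ℝ) : Prop :=
  IsSignCompletion x σ ∧ ∀ i, x i = 0 → 0 < cyclicDelta n i * σ i * σ (i - 1)

variable {τ : Fin n → ℝ}

theorem IsSignCompletion.update_neg (hτ : IsSignCompletion x τ) {i : Fin n} (hi : x i = 0) :
    IsSignCompletion x (Function.update τ i (-τ i)) := by
  refine ⟨fun j => ?_, fun j hj => ?_⟩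
  · by_cases hji : j = i
    · simpa [hji] using hτ.1 i
    · simpa [hji] using hτ.1 j
  · have hji : j ≠ i := fun e => hj (e ▸ hi)
    simpa [hji] using hτ.2 j hj

theorem IsPropagatedCompletion.cyclicN_le (hσ : IsPropagatedCompletion x σ) (hx : x ≠ 0)
    (hτ : IsSignCompletion x τ) : cyclicN n σ ≤ cyclicN n τ := by
  classical
  generalize hk : (Finset.univ.filter fun i => τ i * σ i < 0).card = k
  induction k using Nat.strong_induction_on generalizing τ with
  | _ k ih =>
  have hagree : ∀ i, x i ≠ 0 → 0 < τ i * σ i := fun i hi =>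
    mul_pos_of_mul_pos_of_mul_pos (mul_comm (x i) _ ▸ hτ.2 i hi) (hσ.1.2 i hi)
  by_cases hdis : ∃ i, τ i * σ i < 0
  · -- flip `τ` at a disagreement whose predecessor agrees: `N` does not increase
    obtain ⟨j, hj⟩ := Function.ne_iff.1 hx
    obtain ⟨i, hi, hi1⟩ := Fin.exists_and_not_sub_one hdis ⟨j, (hagree j hj).not_gt⟩
    have hxi : x i = 0 := by_contra fun h => (hagree i h).not_gt hi
    have hi1' : 0 < τ (i - 1) * σ (i - 1) :=
      (not_lt.1 hi1).lt_of_ne (mul_ne_zero (hτ.1 _) (hσ.1.1 _)).symm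
    have hedge : cyclicDelta n i * τ i * τ (i - 1) < 0 := by
      have e : cyclicDelta n i * σ i * σ (i - 1) * (τ i * σ i) * (τ (i - 1) * σ (i - 1)) =
          cyclicDelta n i * τ i * τ (i - 1) * (σ i * σ (i - 1)) ^ 2 := by ring
      exact neg_of_mul_neg_left (e ▸ mul_neg_of_neg_of_pos
        (mul_neg_of_pos_of_neg (hσ.2 i hxi) hi) hi1') (sq_nonneg _)
    have hfilter : (Finset.univ.filter fun j => Function.update τ i (-τ i) j * σ j < 0) =
        (Finset.univ.filter fun j => τ j * σ j < 0).erase i := by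
      ext j
      by_cases hji : j = i
      · subst hji
        simp only [Finset.mem_filter, Function.update_self, Finset.mem_erase, Finset.mem_univ,
          true_and, ne_eq, not_true_eq_false, false_and, iff_false, not_lt]
        linarith
      · simp [hji]
    have hlt : (Finset.univ.filter fun j => Function.update τ i (-τ i) j * σ j < 0).card < k := by
      rw [hfilter, ← hk]
      exact Finset.card_erase_lt_of_mem (by simpa using hi)
    exact (ih _ hlt (hτ.update_neg hxi) rfl).trans (cyclicN_update_neg_le hedge)
  · simp only [not_exists, not_lt] at hdis
    refine (cyclicN_eq_of_forall_mul_pos fun i => ?_).le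
    rw [mul_comm]
    exact (hdis i).lt_of_ne (mul_ne_zero (hτ.1 i) (hσ.1.1 i)).symm

theorem IsPropagatedCompletion.of_update {i : Fin n} (hi : x i = 0) (hi1 : x (i - 1) ≠ 0)
    (hσ : IsPropagatedCompletion (Function.update x i (cyclicDelta n i * x (i - 1))) σ) :
    IsPropagatedCompletion x σ := by
  have hne : i - 1 ≠ i := fun h => hi1 (by rw [h]; exact hi)
  set x' := Function.update x i (cyclicDelta n i * x (i - 1))
  have hx'i : x' i ≠ 0 := by simpa [x'] using ⟨cyclicDelta_ne_zero i, hi1⟩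
  have hx'eq : ∀ j, j ≠ i → x' j = x j := fun j hj => Function.update_of_ne hj _ _
  refine ⟨⟨hσ.1.1, fun j hj => ?_⟩, fun j hj => ?_⟩
  · have hji : j ≠ i := fun e => hj (e ▸ hi)
    simpa [hx'eq j hji] using hσ.1.2 j (hx'eq j hji ▸ hj)
  by_cases hji : j = i
  · subst hji
    have h1 : 0 < cyclicDelta n j * x (j - 1) * σ j := by simpa [x'] using hσ.1.2 j hx'i
    have h2 : 0 < x (j - 1) * σ (j - 1) := by
      simpa [hx'eq _ hne] using hσ.1.2 (j - 1) (by simpa [hx'eq _ hne] using hi1)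
    have e : cyclicDelta n j * x (j - 1) * σ j * (x (j - 1) * σ (j - 1)) =
        cyclicDelta n j * σ j * σ (j - 1) * x (j - 1) ^ 2 := by ring
    exact pos_of_mul_pos_left (e ▸ mul_pos h1 h2) (sq_nonneg _)
  · exact hσ.2 j (by rw [hx'eq j hji]; exact hj)

theorem exists_isPropagatedCompletion (hx : x ≠ 0) : ∃ σ, IsPropagatedCompletion x σ := by
  classical
  generalize hk : (Finset.univ.filter fun i => x i = 0).card = k
  induction k generalizing x with
  | zero =>
    have hΛ : x ∈ cyclicLambda n := fun i hi => by
      simp only [Finset.card_eq_zero, Finset.filter_eq_empty_iff] at hk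
      exact hk (Finset.mem_univ i) hi
    exact ⟨x, ⟨hΛ, fun i _ => mul_self_pos.2 (hΛ i)⟩, fun i hi => absurd hi (hΛ i)⟩
  | succ k ih =>
    -- fill in a zero `x i` next to a nonzero `x (i - 1)` so as to create no sign change at `i`
    have hzero : ∃ i, x i = 0 := by
      obtain ⟨i, hi⟩ := Finset.card_pos.1 (by rw [hk]; exact k.succ_pos)
      exact ⟨i, by simpa using hi⟩
    obtain ⟨i, hi, hi1⟩ := Fin.exists_and_not_sub_one hzero (Function.ne_iff.1 hx)
    set x' := Function.update x i (cyclicDelta n i * x (i - 1))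
    have hx'i : x' i ≠ 0 := by simpa [x'] using ⟨cyclicDelta_ne_zero i, hi1⟩
    have hzeros : (Finset.univ.filter fun j => x' j = 0) =
        (Finset.univ.filter fun j => x j = 0).erase i := by
      ext j
      by_cases hji : j = i
      · subst hji
        simpa using hx'i
      · simp [x', hji]
    obtain ⟨σ, hσ⟩ := ih (fun h => hx'i (congr_fun h i))
      (by rw [hzeros, Finset.card_erase_of_mem (by simpa using hi), hk, Nat.add_sub_cancel])
    exact ⟨σ, hσ.of_update hi hi1⟩

end SignCompletion

namespace LinCNF

variable {n : ℕ} [NeZero n] (S : LinCNF n)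

noncomputable def field (t : ℝ) : (Fin n → ℝ) →L[ℝ] (Fin n → ℝ) :=
  LinearMap.toContinuousLinearMap <| LinearMap.pi fun i =>
    S.diag t i • LinearMap.proj i + S.sub t i • LinearMap.proj (i - 1)

theorem field_apply (t : ℝ) (y : Fin n → ℝ) (i : Fin n) :
    S.field t y i = S.diag t i * y i + S.sub t i * y (i - 1) :=
  rfl

theorem continuous_field : Continuous S.field :=
  continuous_clm_apply.2 fun y => continuous_pi fun i => by
    simp only [field_apply]
    exact ((S.cont_diag i).mul continuous_const).add ((S.cont_sub i).mul continuous_const)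

theorem cyclicDelta_mul_sub_pos (t : ℝ) (i : Fin n) :
    0 < cyclicDelta n i * S.sub t i := by
  unfold cyclicDelta
  split_ifs with h
  · subst h
    linarith [S.sub_neg t]
  · linarith [S.sub_pos t i h]

variable {S} {x : ℝ → Fin n → ℝ}

theorem IsSolution.hasDerivAt (hx : S.IsSolution x) (t : ℝ) :
    HasDerivAt x (S.field t (x t)) t :=
  hasDerivAt_pi.2 (hx t)

theorem IsSolution.continuous (hx : S.IsSolution x) : Continuous x :=
  continuous_iff_continuousAt.2 fun t => (hx.hasDerivAt t).continuousAt

theorem IsSolution.eq_zero_of_apply_eq_zero (hx : S.IsSolution x) {t₀ : ℝ} (h₀ : x t₀ = 0) :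
    x = 0 :=
  ODE_solution_eq_zero_of_linear S.continuous_field hx.hasDerivAt h₀

theorem IsFundamental.apply_ne_zero {Φ : ℝ → (Fin n → ℝ) →ₗ[ℝ] (Fin n → ℝ)}
    (hΦ : S.IsFundamental Φ) {x₀ : Fin n → ℝ} (hx₀ : x₀ ≠ 0) (t : ℝ) : Φ t x₀ ≠ 0 := by
  intro h
  have := congr_fun ((hΦ.2 x₀).eq_zero_of_apply_eq_zero h) 0
  exact hx₀ (by simpa [hΦ.1] using this)

theorem IsFundamental.injective {Φ : ℝ → (Fin n → ℝ) →ₗ[ℝ] (Fin n → ℝ)}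
    (hΦ : S.IsFundamental Φ) (t : ℝ) : Function.Injective (Φ t) :=
  (injective_iff_map_eq_zero (Φ t)).2 fun _ h => not_imp_not.1 (hΦ.apply_ne_zero · t) h

open Fin.NatCast in
theorem IsSolution.eventually_mul_pos (hx : S.IsSolution x) {t₀ : ℝ} (h₀ : x t₀ ≠ 0)
    {σ : Fin n → ℝ} (hσ : IsPropagatedCompletion (x t₀) σ) :
    ∀ᶠ s in 𝓝[>] t₀, ∀ i, 0 < σ i * x s i := by
  have hbase : ∀ i, x t₀ i ≠ 0 → ∀ᶠ s in 𝓝[>] t₀, 0 < σ i * x s i := fun i hi =>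
    have : ContinuousAt (fun s => σ i * x s i) t₀ :=
      (continuous_const.mul ((continuous_apply i).comp hx.continuous)).continuousAt
    nhdsWithin_le_nhds (this.eventually (lt_mem_nhds (by simpa [mul_comm] using hσ.1.2 i hi)))
  -- a zero coordinate takes the sign forced by its predecessor, by induction along the cycle
  have hstep : ∀ m : ℕ, ∀ i, x t₀ (i - m) ≠ 0 → ∀ᶠ s in 𝓝[>] t₀, 0 < σ i * x s i := by
    intro m
    induction m with
    | zero => exact fun i hi => hbase i (by simpa using hi)
    | succ m ih =>
      intro i hi
      by_cases hxi : x t₀ i = 0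
      · have hprev := ih (i - 1) (by rwa [sub_sub, add_comm, ← Nat.cast_add_one])
        refine eventually_pos_of_hasDerivAt_linear (f := fun s => σ i * (S.sub s i * x s (i - 1)))
          (S.cont_diag i)
          (fun t => ((hx t i).const_mul (σ i)).congr_deriv (by ring)) (by simp [hxi]) ?_
        filter_upwards [hprev] with s hs
        have e : cyclicDelta n i * S.sub s i * (cyclicDelta n i * σ i * σ (i - 1)) *
            (σ (i - 1) * x s (i - 1)) =
            σ i * (S.sub s i * x s (i - 1)) * (cyclicDelta n i * σ (i - 1)) ^ 2 := by ring
        exact pos_of_mul_pos_left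
          (e ▸ mul_pos (mul_pos (S.cyclicDelta_mul_sub_pos s i) (hσ.2 i hxi)) hs) (sq_nonneg _)
      · exact hbase i hxi
  obtain ⟨j, hj⟩ := Function.ne_iff.1 h₀
  exact eventually_all.2 fun i => hstep (i - j).val i (by simpa using hj)

theorem IsSolution.eventually_cyclicNm_le (hx : S.IsSolution x) {t₀ : ℝ} (h₀ : x t₀ ≠ 0) :
    ∀ᶠ s in 𝓝[>] t₀, cyclicNm n (x s) ≤ cyclicNm n (x t₀) := by
  obtain ⟨σ, hσ⟩ := exists_isPropagatedCompletion h₀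
  obtain ⟨ρ, hρ, hρN⟩ := exists_isSignCompletion_cyclicN_eq_cyclicNm (x t₀)
  filter_upwards [hx.eventually_mul_pos h₀ hσ] with s hs
  calc cyclicNm n (x s) ≤ cyclicN n σ :=
        IsSignCompletion.cyclicNm_le ⟨hσ.1.1, fun i _ => mul_comm (σ i) _ ▸ hs i⟩
    _ ≤ cyclicN n ρ := hσ.cyclicN_le h₀ hρ
    _ = cyclicNm n (x t₀) := hρN

theorem IsSolution.antitone_cyclicNm (hx : S.IsSolution x) (hnz : ∀ t, x t ≠ 0) :
    Antitone fun t => cyclicNm n (x t) :=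
  (lowerSemicontinuous_cyclicNm.comp hx.continuous).antitone_of_eventually_nhdsGT_le
    fun t => hx.eventually_cyclicNm_le (hnz t)

end LinCNF

theorem stmt7_general (n : ℕ) [NeZero n] (S : LinCNF n)
    (Φ : ℝ → (Fin n → ℝ) →ₗ[ℝ] (Fin n → ℝ)) (hΦ : S.IsFundamental Φ)
    (h : ℕ)
    (SigUp : Submodule ℝ (Fin n → ℝ)) (hSigUp : (SigUp : Set (Fin n → ℝ)) ⊆ KconeUp n h) :
    (∀ t : ℝ, Module.finrank ℝ (SigUp.map (Φ t)) = Module.finrank ℝ SigUp) ∧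
    (∀ t : ℝ, t ≤ 0 → ((SigUp.map (Φ t) : Submodule ℝ (Fin n → ℝ)) : Set (Fin n → ℝ)) ⊆ KconeUp n h) := by
  refine ⟨fun t => (Submodule.equivMapOfInjective (Φ t) (hΦ.injective t) SigUp).finrank_eq.symm,
    ?_⟩
  rintro t ht - ⟨x₀, hx₀, rfl⟩
  by_cases hzero : x₀ = 0
  · exact Or.inl (by simp [hzero])
  rcases hSigUp hx₀ with h0 | hlevel
  · exact absurd h0 hzero
  have hlevel₀ : 2 * h - 1 < cyclicNm n (Φ 0 x₀) := by rwa [hΦ.1, LinearMap.id_apply]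
  exact Or.inr (hlevel₀.trans_le
    ((hΦ.2 x₀).antitone_cyclicNm (hΦ.apply_ne_zero hzero) ht))

/-- If `Σ⁰ ⊆ K^h` is a linear subspace, its image `Σ^t` under
the fundamental solution operator has the same dimension for all `t`, and stays
inside `K^h` for `t ≤ 0`. -/
theorem stmt7 (n : ℕ) [NeZero n] (hn : 2 ≤ n) (S : LinCNF n)
    (Φ : ℝ → (Fin n → ℝ) →ₗ[ℝ] (Fin n → ℝ)) (hΦ : S.IsFundamental Φ)
    (h : ℕ) (h1 : 1 ≤ h) (h2 : h ≤ (ntilde n + 1) / 2)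
    (SigUp : Submodule ℝ (Fin n → ℝ)) (hSigUp : (SigUp : Set (Fin n → ℝ)) ⊆ KconeUp n h) :
    (∀ t : ℝ, Module.finrank ℝ (SigUp.map (Φ t)) = Module.finrank ℝ SigUp) ∧
    (∀ t : ℝ, t ≤ 0 → ((SigUp.map (Φ t) : Submodule ℝ (Fin n → ℝ)) : Set (Fin n → ℝ)) ⊆ KconeUp n h) :=
  stmt7_general n S Φ hΦ h SigUp hSigUp
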